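/- For g(x) = x − tanh(x) and T(x,y) = (g(y+x) + g(y−x))/2, one has 0 ≤ y·T(x,y) ≤ x²y² + y⁴ for all real x, y. -/

import Mathlib

/-!
Since `g` is odd, so is `y ↦ T(x, y)`, and since `g' = tanh²`,
`∂_y T(x, y) = (tanh²(y + x) + tanh²(y − x)) / 2`. This is nonnegative, and `tanh² u ≤ u²` bounds it
by `((y + x)² + (y − x)²) / 2 = x² + y²`. Integrating from `0` gives `0 ≤ T(x, y) ≤ x²y + y³/3`
for `y ≥ 0`; multiplying by `y` and using oddness for `y < 0` gives the claim.
-/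

/-- `g(x) = x − tanh(x)`. -/
noncomputable def gfun (x : ℝ) : ℝ := x - Real.tanh x

/-- `T(x,y) = (g(y+x) + g(y−x))/2`. -/
noncomputable def Tfun (x y : ℝ) : ℝ := (gfun (y + x) + gfun (y - x)) / 2

theorem Real.hasDerivAt_tanh (u : ℝ) : HasDerivAt tanh (1 - tanh u ^ 2) u := by
  have hcosh : cosh u ≠ 0 := (cosh_pos u).ne'
  have h := (hasDerivAt_sinh u).div (hasDerivAt_cosh u) hcosh
  rw [show sinh / cosh = tanh from funext fun v => (tanh_eq_sinh_div_cosh v).symm] at h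
  refine h.congr_deriv ?_
  rw [tanh_eq_sinh_div_cosh]
  field_simp

theorem Real.tanh_nonneg {u : ℝ} (hu : 0 ≤ u) : 0 ≤ tanh u := by
  rw [tanh_eq_sinh_div_cosh]
  exact div_nonneg (sinh_nonneg_iff.mpr hu) (cosh_pos u).le

theorem hasDerivAt_gfun (u : ℝ) : HasDerivAt gfun (Real.tanh u ^ 2) u :=
  ((hasDerivAt_id u).sub (Real.hasDerivAt_tanh u)).congr_deriv (by ring)

theorem monotone_gfun : Monotone gfun :=
  monotone_of_hasDerivAt_nonneg hasDerivAt_gfun fun u => sq_nonneg (Real.tanh u)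

theorem gfun_neg (u : ℝ) : gfun (-u) = -gfun u := by
  simp only [gfun, Real.tanh_neg]
  ring

theorem Real.tanh_le_self {u : ℝ} (hu : 0 ≤ u) : tanh u ≤ u := by
  have h := monotone_gfun hu
  simp only [gfun, tanh_zero, sub_zero] at h
  linarith

theorem Real.abs_tanh_le_abs (u : ℝ) : |tanh u| ≤ |u| := by
  wlog hu : 0 ≤ u generalizing u
  · simpa only [tanh_neg, abs_neg] using this (-u) (by linarith)
  rw [abs_of_nonneg (tanh_nonneg hu), abs_of_nonneg hu]
  exact tanh_le_self hu

theorem Real.tanh_sq_le_sq (u : ℝ) : tanh u ^ 2 ≤ u ^ 2 :=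
  sq_le_sq.mpr (abs_tanh_le_abs u)

theorem Tfun_zero_right (x : ℝ) : Tfun x 0 = 0 := by
  simp only [Tfun, zero_add, zero_sub, gfun_neg]
  ring

theorem Tfun_neg_right (x y : ℝ) : Tfun x (-y) = -Tfun x y := by
  rw [Tfun, Tfun, show -y + x = -(y - x) by ring, show -y - x = -(y + x) by ring,
    gfun_neg, gfun_neg]
  ring

theorem hasDerivAt_Tfun_right (x y : ℝ) :
    HasDerivAt (Tfun x) ((Real.tanh (y + x) ^ 2 + Real.tanh (y - x) ^ 2) / 2) y := by
  have hplus := (hasDerivAt_gfun (y + x)).comp y ((hasDerivAt_id y).add_const x)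
  have hminus := (hasDerivAt_gfun (y - x)).comp y ((hasDerivAt_id y).sub_const x)
  exact ((hplus.add hminus).div_const 2).congr_deriv (by ring)

theorem Tfun_nonneg (x : ℝ) {y : ℝ} (hy : 0 ≤ y) : 0 ≤ Tfun x y := by
  have hmono : Monotone (Tfun x) :=
    monotone_of_hasDerivAt_nonneg (hasDerivAt_Tfun_right x) fun y => by positivity
  simpa only [Tfun_zero_right] using hmono hy

theorem Tfun_le (x : ℝ) {y : ℝ} (hy : 0 ≤ y) : Tfun x y ≤ x ^ 2 * y + y ^ 3 / 3 := by
  have hderiv (y : ℝ) : HasDerivAt (fun y => x ^ 2 * y + y ^ 3 / 3 - Tfun x y)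
      (x ^ 2 + y ^ 2 - (Real.tanh (y + x) ^ 2 + Real.tanh (y - x) ^ 2) / 2) y := by
    have hpoly := ((hasDerivAt_id y).const_mul (x ^ 2)).add ((hasDerivAt_pow 3 y).div_const 3)
    refine (hpoly.sub (hasDerivAt_Tfun_right x y)).congr_deriv ?_
    norm_num
  have hmono := monotone_of_hasDerivAt_nonneg hderiv fun y => by
    have hplus := Real.tanh_sq_le_sq (y + x)
    have hminus := Real.tanh_sq_le_sq (y - x)
    dsimp only [Pi.zero_apply]
    nlinarith
  have := hmono hy
  simp only [Tfun_zero_right] at this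
  linarith

/-- `0 ≤ y·T(x,y) ≤ x²y² + y⁴` for all real `x, y`. -/
theorem stmt_7 (x y : ℝ) :
    0 ≤ y * Tfun x y ∧ y * Tfun x y ≤ x ^ 2 * y ^ 2 + y ^ 4 := by
  wlog hy : 0 ≤ y generalizing y
  · simpa only [Tfun_neg_right, neg_mul_neg, even_two.neg_pow, (by decide : Even 4).neg_pow]
      using this (-y) (by linarith)
  have hT := Tfun_le x hy
  refine ⟨mul_nonneg hy (Tfun_nonneg x hy), ?_⟩
  calc y * Tfun x y ≤ y * (x ^ 2 * y + y ^ 3 / 3) := mul_le_mul_of_nonneg_left hT hy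
    _ ≤ x ^ 2 * y ^ 2 + y ^ 4 := by nlinarith [pow_nonneg hy 4]
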